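/- arXiv:2303.02474 — 2 statements merged into one kernel-verified Lean document; each statement's English description precedes it below -/
import Mathlib

section
/- Let W ∈ ℤ^{m×n} have entries of absolute value at most Δ, let W' ∈ ℝ^{k×n} have all rows in the row span of W, and fix z ∈ ℤ^n. Then the set B_N = {W'x : x ∈ {0,1}^n, ‖z − x‖₁ ≤ N} has cardinality at most (2NΔ+1)^m. -/
/-! Rows of `W'` lie in the row span of `W`, so `W' x` is a function of `W x`. For `x` within
ℓ₁-distance `N` of `z`, each coordinate of `W x` lies within `NΔ` of the corresponding coordinate
of `W z`, so `W x` ranges over a box of `(2NΔ+1)^m` integer points. -/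

open Matrix

theorem Function.FactorsThrough.finite_image_and_ncard_image_le {α β γ : Type*}
    {f : α → γ} {g : α → β} (hf : f.FactorsThrough g) {s : Set α} {t : Finset β}
    (hst : Set.MapsTo g s t) : (f '' s).Finite ∧ (f '' s).ncard ≤ t.card := by
  rcases s.eq_empty_or_nonempty with rfl | ⟨a, -⟩
  · simp
  set φ := Function.extend g f fun _ => f a
  have hsub : f '' s ⊆ φ '' t := by
    rintro _ ⟨x, hx, rfl⟩
    exact ⟨g x, hst hx, hf.extend_apply _ x⟩
  have ht : (φ '' t).Finite := t.finite_toSet.image φ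
  refine ⟨ht.subset hsub, ?_⟩
  calc (f '' s).ncard ≤ (φ '' t).ncard := Set.ncard_le_ncard hsub ht
    _ ≤ (t : Set β).ncard := Set.ncard_image_le t.finite_toSet
    _ = t.card := Set.ncard_coe_finset t

theorem Matrix.mulVec_eq_mulVec_of_mem_span_rows {l k n R : Type*} [Fintype n] [CommRing R]
    {A : Matrix l n R} {B : Matrix k n R} (hB : ∀ i, B i ∈ Submodule.span R (Set.range A))
    {x y : n → R} (h : A *ᵥ x = A *ᵥ y) : B *ᵥ x = B *ᵥ y := by
  have hspan : ∀ v ∈ Submodule.span R (Set.range A), v ⬝ᵥ x = v ⬝ᵥ y := by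
    intro v hv
    induction hv using Submodule.span_induction with
    | mem v hv =>
      obtain ⟨r, rfl⟩ := hv
      exact congrFun h r
    | zero => simp only [zero_dotProduct]
    | add v w _ _ hv hw => simp only [add_dotProduct, hv, hw]
    | smul c v _ hv => simp only [smul_dotProduct, hv]
  exact funext fun i => hspan (B i) (hB i)

theorem Matrix.abs_mulVec_apply_le {m n R : Type*} [Fintype n] [Ring R] [LinearOrder R]
    [IsOrderedRing R] {A : Matrix m n R} {c : R} {i : m} (hA : ∀ j, |A i j| ≤ c)
    (v : n → R) : |(A *ᵥ v) i| ≤ c * ∑ j, |v j| := by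
  rw [Finset.mul_sum]
  refine (Finset.abs_sum_le_sum_abs _ _).trans (Finset.sum_le_sum fun j _ => ?_)
  rw [abs_mul]
  exact mul_le_mul_of_nonneg_right (hA j) (abs_nonneg _)

theorem Matrix.mulVec_mem_piFinset_Icc {m n : Type*} [Fintype m] [DecidableEq m] [Fintype n]
    {A : Matrix m n ℤ} {c r : ℕ} (hA : ∀ i j, |A i j| ≤ c) {x z : n → ℤ}
    (hxz : ∑ j, |z j - x j| ≤ r) :
    A *ᵥ x ∈ Fintype.piFinset fun i =>
      Finset.Icc ((A *ᵥ z) i - (r * c : ℕ)) ((A *ᵥ z) i + (r * c : ℕ)) := by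
  simp only [Fintype.mem_piFinset, Finset.mem_Icc]
  intro i
  have hdist : |(A *ᵥ (x - z)) i| ≤ (r * c : ℕ) := calc
    |(A *ᵥ (x - z)) i| ≤ c * ∑ j, |(x - z) j| := abs_mulVec_apply_le (hA i) _
    _ ≤ c * r := by
      simp only [Pi.sub_apply, abs_sub_comm (x _)]
      exact mul_le_mul_of_nonneg_left hxz (by positivity)
    _ = (r * c : ℕ) := by push_cast; ring
  rw [mulVec_sub, Pi.sub_apply, abs_le] at hdist
  constructor <;> linarith [hdist.1, hdist.2]

theorem Int.card_piFinset_Icc_sub_add {ι : Type*} [Fintype ι] [DecidableEq ι] (a : ι → ℤ)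
    (r : ℕ) :
    (Fintype.piFinset fun i => Finset.Icc (a i - r) (a i + r)).card =
      (2 * r + 1) ^ Fintype.card ι := by
  have hcard : ∀ i, (Finset.Icc (a i - r) (a i + r)).card = 2 * r + 1 := fun i => by
    rw [Int.card_Icc, show a i + r + 1 - (a i - r) = ((2 * r + 1 : ℕ) : ℤ) by push_cast; ring,
      Int.toNat_natCast]
  simp only [Fintype.card_piFinset, hcard, Finset.prod_const, Finset.card_univ]

/-- With `W ∈ ℤ^{m×n}` having entries bounded by `Δ`, `W'` having rows in the
row span of `W`, and `z ∈ ℤ^n`, the set `B_N = {W'x : x ∈ {0,1}^n, ‖z − x‖₁ ≤ N}` has at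
most `(2NΔ+1)^m` elements. -/
theorem stmt5 (m n k : ℕ) (Δ N : ℕ) (W : Matrix (Fin m) (Fin n) ℤ)
    (hW : ∀ i j, |W i j| ≤ (Δ : ℤ))
    (W' : Matrix (Fin k) (Fin n) ℝ)
    (hrows : ∀ i : Fin k,
      W' i ∈ Submodule.span ℝ (Set.range fun r : Fin m => fun j => ((W r j : ℤ) : ℝ)))
    (z : Fin n → ℤ) :
    let B : Set (Fin k → ℝ) :=
      {v | ∃ x : Fin n → ℤ, (∀ i, x i = 0 ∨ x i = 1) ∧ (∑ i, |z i - x i|) ≤ (N : ℤ) ∧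
        v = W'.mulVec fun i => ((x i : ℤ) : ℝ)}
    B.Finite ∧ B.ncard ≤ (2 * N * Δ + 1) ^ m := by
  intro B
  set X : Set (Fin n → ℤ) := {x | (∀ i, x i = 0 ∨ x i = 1) ∧ (∑ i, |z i - x i|) ≤ (N : ℤ)}
  set g : (Fin n → ℤ) → (Fin k → ℝ) := fun x => W' *ᵥ fun i => ((x i : ℤ) : ℝ)
  have hB : B = g '' X := by
    ext v
    simp only [B, X, g, Set.mem_ofPred_eq, Set.mem_image, and_assoc, eq_comm]
  have hfactor : g.FactorsThrough (W *ᵥ ·) := fun x y hxy =>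
    mulVec_eq_mulVec_of_mem_span_rows (A := W.map (Int.castRingHom ℝ)) hrows <| funext fun r => by
      have hr := congrArg (Int.castRingHom ℝ) (congrFun hxy r)
      rwa [RingHom.map_mulVec, RingHom.map_mulVec] at hr
  have hbox : Set.MapsTo (W *ᵥ ·) X (Fintype.piFinset fun i =>
      Finset.Icc ((W *ᵥ z) i - (N * Δ : ℕ)) ((W *ᵥ z) i + (N * Δ : ℕ))) :=
    fun x hx => mulVec_mem_piFinset_Icc hW hx.2
  rw [hB]
  convert hfactor.finite_image_and_ncard_image_le hbox using 2
  rw [Int.card_piFinset_Icc_sub_add, Fintype.card_fin, mul_assoc]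
end

section
/- Let g : ℝ^m → ℝ be convex, W ∈ ℝ^{m×n}, and c ∈ ℝ^n. Suppose the continuous relaxation min{cᵀx + g(Wx) : x ∈ [0,1]^n} attains its minimum. Then there exists an optimal solution z of the relaxation with at most m fractional components, i.e., |{i : z_i ∉ {0,1}}| ≤ m. -/
/-!
Let `z` be optimal. If more than `m` coordinates of `z` are fractional, the columns of `W` indexed
by them are linearly dependent, so some `d ≠ 0` supported on them has `W d = 0`; replacing `d` by
`-d` we may assume `cᵀd ≤ 0`. Along `z + t d` the value of `g (W x)` is constant and the linear
part does not increase, so moving until the first coordinate reaches `0` or `1` gives an optimal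
point with fewer fractional coordinates, and we iterate.
-/

open Matrix Set Function

theorem Matrix.exists_ne_zero_mulVec_eq_zero_of_card_lt_ncard {K ι κ : Type*} [Field K]
    [Fintype ι] [Fintype κ] (W : Matrix κ ι K) {s : Set ι} (hs : Fintype.card κ < s.ncard) :
    ∃ d : ι → K, d ≠ 0 ∧ d.support ⊆ s ∧ W *ᵥ d = 0 := by
  classical
  let φ := W.mulVecLin ∘ₗ ExtendByZero.linearMap K ((↑) : s → ι)
  have hker : LinearMap.ker φ ≠ ⊥ := LinearMap.ker_ne_bot_of_finrank_lt <| by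
    simpa [← Nat.card_coe_set_eq] using hs
  obtain ⟨a, ha, ha0⟩ := (Submodule.ne_bot_iff _).1 hker
  refine ⟨extend ((↑) : s → ι) a 0, ?_, ?_, ha⟩
  · obtain ⟨i, hi⟩ := Function.ne_iff.1 ha0
    exact Function.ne_iff.2 ⟨i, by simpa [Subtype.val_injective.extend_apply] using hi⟩
  · intro i hi
    by_contra his
    exact hi (extend_apply' _ _ _ fun ⟨j, hj⟩ => his (hj ▸ j.2))

namespace Hypercube

/-- The time at which the path `t ↦ x + t * δ`, `t ≥ 0`, leaves `[0, 1]`. -/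
noncomputable def exitTime (x δ : ℝ) : ℝ := if 0 < δ then (1 - x) / δ else -x / δ

theorem exitTime_pos {x δ : ℝ} (hx : x ∈ Ioo 0 1) (hδ : δ ≠ 0) : 0 < exitTime x δ := by
  unfold exitTime
  split_ifs with h
  · exact div_pos (sub_pos.2 hx.2) h
  · exact div_pos_of_neg_of_neg (neg_neg_of_pos hx.1) (lt_of_le_of_ne (not_lt.1 h) hδ)

theorem add_mul_mem_Icc_of_le_exitTime {x δ t : ℝ} (hx : x ∈ Icc 0 1) (ht : 0 ≤ t)
    (hle : t ≤ exitTime x δ) : x + t * δ ∈ Icc 0 1 := by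
  unfold exitTime at hle
  rcases lt_trichotomy δ 0 with h | rfl | h
  · rw [if_neg h.not_gt, le_div_iff_of_neg h] at hle
    constructor <;> nlinarith [hx.2]
  · simpa using hx
  · rw [if_pos h, le_div_iff₀ h] at hle
    constructor <;> nlinarith [hx.1]

theorem add_exitTime_mul_eq_zero_or_eq_one (x : ℝ) {δ : ℝ} (hδ : δ ≠ 0) :
    x + exitTime x δ * δ = 0 ∨ x + exitTime x δ * δ = 1 := by
  unfold exitTime
  split_ifs
  · right; field_simp; ring
  · left; field_simp; ring

variable {ι : Type*}

def fractionalCoords (z : ι → ℝ) : Set ι := {i | z i ≠ 0 ∧ z i ≠ 1}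

theorem mem_Ioo_of_mem_fractionalCoords {z : ι → ℝ} {i : ι} (hz : z i ∈ Icc 0 1)
    (hi : i ∈ fractionalCoords z) : z i ∈ Ioo 0 1 :=
  ⟨hz.1.lt_of_ne' hi.1, hz.2.lt_of_ne hi.2⟩

theorem exists_add_smul_mem_fractionalCoords_ssubset [Finite ι] {z d : ι → ℝ}
    (hz : ∀ i, z i ∈ Icc 0 1) (hd : d ≠ 0) (hsupp : d.support ⊆ fractionalCoords z) :
    ∃ t : ℝ, 0 ≤ t ∧ (∀ i, (z + t • d) i ∈ Icc 0 1) ∧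
      fractionalCoords (z + t • d) ⊂ fractionalCoords z := by
  obtain ⟨i₀, hi₀, hmin⟩ := d.support.exists_min_image (fun i => exitTime (z i) (d i))
    d.support.toFinite (support_nonempty_iff.2 hd)
  set t := exitTime (z i₀) (d i₀)
  have ht : 0 ≤ t := (exitTime_pos (mem_Ioo_of_mem_fractionalCoords (hz i₀) (hsupp hi₀)) hi₀).le
  have hsub : fractionalCoords (z + t • d) ⊆ fractionalCoords z := by
    intro i hi
    by_cases hdi : d i = 0
    · simpa [fractionalCoords, hdi] using hi
    · exact hsupp hdi
  refine ⟨t, ht, fun i => ?_, (ssubset_iff_of_subset hsub).2 ⟨i₀, hsupp hi₀, ?_⟩⟩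
  · by_cases hdi : d i = 0
    · simpa [hdi] using hz i
    · exact add_mul_mem_Icc_of_le_exitTime (hz i) ht (hmin i hdi)
  · rintro ⟨h0, h1⟩
    exact (add_exitTime_mul_eq_zero_or_eq_one (z i₀) hi₀).elim h0 h1

variable [Fintype ι] {κ : Type*} [Fintype κ] (W : Matrix κ ι ℝ) (c : ι → ℝ) (g : (κ → ℝ) → ℝ)

theorem exists_le_fractionalCoords_ssubset {z : ι → ℝ} (hz : ∀ i, z i ∈ Icc 0 1)
    (hcard : Fintype.card κ < (fractionalCoords z).ncard) :
    ∃ z' : ι → ℝ, (∀ i, z' i ∈ Icc 0 1) ∧ c ⬝ᵥ z' + g (W *ᵥ z') ≤ c ⬝ᵥ z + g (W *ᵥ z) ∧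
      fractionalCoords z' ⊂ fractionalCoords z := by
  obtain ⟨d, hd, hsupp, hWd⟩ := W.exists_ne_zero_mulVec_eq_zero_of_card_lt_ncard hcard
  obtain ⟨e, he, hsupp', hWe, hce⟩ : ∃ e : ι → ℝ,
      e ≠ 0 ∧ e.support ⊆ fractionalCoords z ∧ W *ᵥ e = 0 ∧ c ⬝ᵥ e ≤ 0 := by
    rcases le_total (c ⬝ᵥ d) 0 with h | h
    · exact ⟨d, hd, hsupp, hWd, h⟩
    · exact ⟨-d, neg_ne_zero.2 hd, by rwa [support_neg], by rw [mulVec_neg, hWd, neg_zero],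
        by rwa [dotProduct_neg, neg_nonpos]⟩
  obtain ⟨t, ht, hbox, hssub⟩ := exists_add_smul_mem_fractionalCoords_ssubset hz he hsupp'
  refine ⟨z + t • e, hbox, ?_, hssub⟩
  rw [mulVec_add, mulVec_smul, hWe, smul_zero, add_zero, dotProduct_add, dotProduct_smul,
    smul_eq_mul]
  nlinarith [mul_nonpos_of_nonneg_of_nonpos ht hce]

theorem exists_le_ncard_fractionalCoords_le {z : ι → ℝ} (hz : ∀ i, z i ∈ Icc 0 1) :
    ∃ z' : ι → ℝ, (∀ i, z' i ∈ Icc 0 1) ∧ c ⬝ᵥ z' + g (W *ᵥ z') ≤ c ⬝ᵥ z + g (W *ᵥ z) ∧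
      (fractionalCoords z').ncard ≤ Fintype.card κ := by
  induction h : (fractionalCoords z).ncard using Nat.strong_induction_on generalizing z with
  | _ k ih =>
    by_cases hk : k ≤ Fintype.card κ
    · exact ⟨z, hz, le_rfl, h ▸ hk⟩
    · obtain ⟨z', hz', hle, hssub⟩ := exists_le_fractionalCoords_ssubset W c g hz (h ▸ not_le.1 hk)
      obtain ⟨z'', hz'', hle', hcard⟩ := ih _ (h ▸ ncard_lt_ncard hssub) hz' rfl
      exact ⟨z'', hz'', hle'.trans hle, hcard⟩

end Hypercube

theorem stmt8_general (m n : ℕ) (W : Matrix (Fin m) (Fin n) ℝ) (c : Fin n → ℝ)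
    (g : (Fin m → ℝ) → ℝ)
    (f : (Fin n → ℝ) → ℝ) (hf : f = fun x => (∑ i, c i * x i) + g (W.mulVec x))
    (box : Set (Fin n → ℝ)) (hbox : box = {x | ∀ i, 0 ≤ x i ∧ x i ≤ 1})
    (hattain : ∃ x₀ ∈ box, ∀ x ∈ box, f x₀ ≤ f x) :
    ∃ z ∈ box, (∀ x ∈ box, f z ≤ f x) ∧
      Set.ncard {i : Fin n | z i ≠ 0 ∧ z i ≠ 1} ≤ m := by
  subst hf hbox
  obtain ⟨x₀, hx₀, hopt⟩ := hattain
  obtain ⟨z, hz, hle, hcard⟩ := Hypercube.exists_le_ncard_fractionalCoords_le W c g hx₀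
  exact ⟨z, hz, fun x hx => hle.trans (hopt x hx), by rwa [Fintype.card_fin] at hcard⟩

/-- If the convex relaxation `min{cᵀx + g(Wx) : x ∈ [0,1]^n}` attains its
minimum, then some optimal solution has at most `m` fractional components. -/
theorem stmt8 (m n : ℕ) (W : Matrix (Fin m) (Fin n) ℝ) (c : Fin n → ℝ)
    (g : (Fin m → ℝ) → ℝ) (hg : ConvexOn ℝ Set.univ g)
    (f : (Fin n → ℝ) → ℝ) (hf : f = fun x => (∑ i, c i * x i) + g (W.mulVec x))
    (box : Set (Fin n → ℝ)) (hbox : box = {x | ∀ i, 0 ≤ x i ∧ x i ≤ 1})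
    (hattain : ∃ x₀ ∈ box, ∀ x ∈ box, f x₀ ≤ f x) :
    ∃ z ∈ box, (∀ x ∈ box, f z ≤ f x) ∧
      Set.ncard {i : Fin n | z i ≠ 0 ∧ z i ≠ 1} ≤ m :=
  stmt8_general m n W c g f hf box hbox hattain
end
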